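/- arXiv:2304.11647 — 4 statements merged into one kernel-verified Lean document; each statement's English description precedes it below -/
import Mathlib

section
/- Let X be a Banach space, S ⊆ X a nonempty closed set, and f : S → ℝ ∪ {+∞} a proper lower semicontinuous function bounded below on S. Then the minimization problem (f, S) is well-posed modulus compact if and only if lim_{t ↓ 0} α(Ω_f^S(t)) = 0. -/
open Filter Topology

/-- `Ω_f^S(ε) = {x ∈ S : f(x) ≤ inf_S f + ε}`. -/
noncomputable def OmegaSet {X : Type*} (f : X → EReal) (S : Set X) (ε : ℝ) : Set X :=
  {x ∈ S | f x ≤ sInf (f '' S) + (ε : EReal)}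

/-- The Kuratowski index of non-compactness of `A`: the infimum of all `ε > 0` such that
`A` admits a finite `ε`-net. -/
noncomputable def kurIndex {X : Type*} [PseudoMetricSpace X] (A : Set X) : ENNReal :=
  sInf {ε : ENNReal | 0 < ε ∧ ∃ F : Set X, F.Finite ∧
    ∀ x ∈ A, ∃ y ∈ F, ENNReal.ofReal (dist x y) ≤ ε}

/-- The minimization problem `(f, S)` is well-posed modulus compact: `inf_S f` is finite,
the set of minimizers is nonempty and compact, and every minimizing sequence approaches
the set of minimizers in distance. -/
def WPMC {X : Type*} [NormedAddCommGroup X] (f : X → EReal) (S : Set X) : Prop :=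
  (∃ m : ℝ, sInf (f '' S) = (m : EReal)) ∧
  (OmegaSet f S 0).Nonempty ∧ IsCompact (OmegaSet f S 0) ∧
  ∀ u : ℕ → X, (∀ n, u n ∈ S) →
    Tendsto (fun n => f (u n)) atTop (𝓝 (sInf (f '' S))) →
    Tendsto (fun n => Metric.infDist (u n) (OmegaSet f S 0)) atTop (𝓝 (0 : ℝ))

section Aux

variable {X : Type*} [NormedAddCommGroup X] {f : X → EReal} {S : Set X}

lemma omega_mono {s t : ℝ} (h : s ≤ t) : OmegaSet f S s ⊆ OmegaSet f S t := fun x hx =>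
  ⟨hx.1, hx.2.trans (add_le_add le_rfl (EReal.coe_le_coe_iff.mpr h))⟩

lemma omega_subset_S (t : ℝ) : OmegaSet f S t ⊆ S := fun _ hx => hx.1

lemma omega_closed (hScl : IsClosed S) (hlsc : LowerSemicontinuousOn f S) (t : ℝ) :
    IsClosed (OmegaSet f S t) := by
  apply isClosed_of_closure_subset
  intro x hx
  have hxS : x ∈ S := hScl.closure_subset (closure_mono (omega_subset_S t) hx)
  refine ⟨hxS, ?_⟩
  by_contra hgt
  push_neg at hgt
  have h1 : ∀ᶠ z in 𝓝[S] x, sInf (f '' S) + (t : EReal) < f z := hlsc x hxS _ hgt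
  have hne : (𝓝[OmegaSet f S t] x).NeBot := mem_closure_iff_nhdsWithin_neBot.mp hx
  have h2 : ∀ᶠ z in 𝓝[OmegaSet f S t] x, sInf (f '' S) + (t : EReal) < f z :=
    (nhdsWithin_mono x (omega_subset_S t)) h1
  have h3 : ∀ᶠ z in 𝓝[OmegaSet f S t] x, f z ≤ sInf (f '' S) + (t : EReal) :=
    eventually_nhdsWithin_of_forall (fun z hz => hz.2)
  obtain ⟨z, hz1, hz2⟩ := (h2.and h3).exists
  exact absurd hz2 (not_le.mpr hz1)

lemma omega_nonempty {m : ℝ} (hm : sInf (f '' S) = (m : EReal)) {t : ℝ} (ht : 0 < t) :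
    (OmegaSet f S t).Nonempty := by
  have hlt : sInf (f '' S) < sInf (f '' S) + (t : EReal) := by
    rw [hm, ← EReal.coe_add]
    exact_mod_cast by linarith
  obtain ⟨y, hy, hylt⟩ := sInf_lt_iff.mp hlt
  obtain ⟨x, hxS, rfl⟩ := hy
  exact ⟨x, hxS, hylt.le⟩

lemma mem_omega_zero_iff {x : X} : x ∈ OmegaSet f S 0 ↔ x ∈ S ∧ f x ≤ sInf (f '' S) := by
  unfold OmegaSet
  rw [EReal.coe_zero, add_zero]
  rfl

/-- Key fact from the tendsto hypothesis: arbitrarily fine finite nets on some `Ω(t)`. -/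
lemma key_net (htend : Tendsto (fun t : ℝ => kurIndex (OmegaSet f S t)) (𝓝[>] 0) (𝓝 0)) :
    ∀ ε : ℝ, 0 < ε → ∃ t : ℝ, 0 < t ∧ ∃ F : Set X, F.Finite ∧
      ∀ x ∈ OmegaSet f S t, ∃ y ∈ F, dist x y < ε := by
  intro ε hε
  have hev : ∀ᶠ t in 𝓝[>] (0:ℝ), kurIndex (OmegaSet f S t) < ENNReal.ofReal ε := by
    exact htend (IsOpen.mem_nhds isOpen_Iio (by exact ENNReal.ofReal_pos.mpr hε))
  obtain ⟨t, htmem, ht0⟩ := (hev.and self_mem_nhdsWithin).exists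
  obtain ⟨δ, hδmem, hδlt⟩ := sInf_lt_iff.mp htmem
  obtain ⟨hδ0, F, hF, hnet⟩ := hδmem
  refine ⟨t, ht0, F, hF, fun x hx => ?_⟩
  obtain ⟨y, hyF, hyd⟩ := hnet x hx
  refine ⟨y, hyF, ?_⟩
  have := lt_of_le_of_lt hyd hδlt
  rwa [ENNReal.ofReal_lt_ofReal_iff hε] at this

/-- Any "asymptotically minimizing" sequence in `S` has a subsequence converging
to a minimizer. -/
lemma exists_subseq (hScl : IsClosed S) (hlsc : LowerSemicontinuousOn f S)
    {m : ℝ} (hm : sInf (f '' S) = (m : EReal)) [CompleteSpace X]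
    (K : ∀ ε : ℝ, 0 < ε → ∃ t : ℝ, 0 < t ∧ ∃ F : Set X, F.Finite ∧
      ∀ x ∈ OmegaSet f S t, ∃ y ∈ F, dist x y < ε)
    (u : ℕ → X) (hu : ∀ n, u n ∈ S)
    (hmin : ∀ t : ℝ, 0 < t → ∀ᶠ n in atTop, f (u n) ≤ sInf (f '' S) + (t : EReal)) :
    ∃ x ∈ OmegaSet f S 0, ∃ φ : ℕ → ℕ, StrictMono φ ∧ Tendsto (u ∘ φ) atTop (𝓝 x) := by
  have htb : TotallyBounded (Set.range u) := by
    rw [Metric.totallyBounded_iff]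
    intro ε hε
    obtain ⟨t, ht, F, hF, hFnet⟩ := K ε hε
    obtain ⟨N, hN⟩ := eventually_atTop.mp (hmin t ht)
    refine ⟨F ∪ u '' Set.Iio N, hF.union ((Set.finite_Iio N).image u), ?_⟩
    rintro _ ⟨n, rfl⟩
    rcases lt_or_ge n N with hn | hn
    · exact Set.mem_biUnion (Set.mem_union_right _ ⟨n, hn, rfl⟩)
        (Metric.mem_ball_self hε)
    · obtain ⟨y, hyF, hyd⟩ := hFnet (u n) ⟨hu n, hN n hn⟩
      exact Set.mem_biUnion (Set.mem_union_left _ hyF) hyd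
  have hcomp : IsCompact (closure (Set.range u)) :=
    TotallyBounded.isCompact_of_isClosed htb.closure isClosed_closure
  obtain ⟨x, hxcl, φ, hφ, htends⟩ :=
    hcomp.tendsto_subseq (fun n => subset_closure (Set.mem_range_self n))
  have hxS : x ∈ S :=
    hScl.mem_of_tendsto htends (Eventually.of_forall fun n => hu (φ n))
  refine ⟨x, ?_, φ, hφ, htends⟩
  rw [mem_omega_zero_iff]
  refine ⟨hxS, ?_⟩
  by_contra hgt
  push_neg at hgt
  obtain ⟨y, hy1, hy2⟩ := EReal.exists_between_coe_real hgt
  have h1 : ∀ᶠ z in 𝓝[S] x, (y : EReal) < f z := hlsc x hxS _ hy2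
  have htendsW : Tendsto (u ∘ φ) atTop (𝓝[S] x) :=
    tendsto_nhdsWithin_iff.mpr ⟨htends, Eventually.of_forall fun n => hu (φ n)⟩
  have h2 : ∀ᶠ n in atTop, (y : EReal) < f (u (φ n)) := htendsW h1
  have hym : m < y := by rwa [hm, EReal.coe_lt_coe_iff] at hy1
  have h3 : ∀ᶠ n in atTop, f (u n) ≤ sInf (f '' S) + ((y - m : ℝ) : EReal) :=
    hmin (y - m) (by linarith)
  have h4 : ∀ᶠ n in atTop, f (u (φ n)) ≤ sInf (f '' S) + ((y - m : ℝ) : EReal) :=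
    (hφ.tendsto_atTop) h3
  obtain ⟨n, hn1, hn2⟩ := (h2.and h4).exists
  rw [hm, ← EReal.coe_add] at hn2
  have : (y : EReal) < ((m + (y - m) : ℝ) : EReal) := lt_of_lt_of_le hn1 hn2
  rw [EReal.coe_lt_coe_iff] at this
  linarith

end Aux

/-- For a nonempty closed `S` and a proper lower semicontinuous `f : S → ℝ ∪ {+∞}` bounded
below on `S`, the problem `(f,S)` is wpmc iff `lim_{t ↓ 0} α(Ω_f^S(t)) = 0`. -/
theorem stmt1 {X : Type*} [NormedAddCommGroup X] [NormedSpace ℝ X] [CompleteSpace X]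
    (S : Set X) (hS : S.Nonempty) (hScl : IsClosed S)
    (f : X → EReal) (hbot : ∀ x, f x ≠ ⊥)
    (hproper : ∃ x ∈ S, f x ≠ ⊤)
    (hlsc : LowerSemicontinuousOn f S)
    (hbdd : ∃ m : ℝ, ∀ x ∈ S, (m : EReal) ≤ f x) :
    WPMC f S ↔ Tendsto (fun t : ℝ => kurIndex (OmegaSet f S t)) (𝓝[>] 0) (𝓝 0) := by
  -- the infimum is a real number
  obtain ⟨m, hm⟩ : ∃ m : ℝ, sInf (f '' S) = (m : EReal) := by
    obtain ⟨x₀, hx₀S, hx₀⟩ := hproper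
    obtain ⟨b, hb⟩ := hbdd
    have h1 : (b : EReal) ≤ sInf (f '' S) := le_sInf (by rintro _ ⟨x, hx, rfl⟩; exact hb x hx)
    have h2 : sInf (f '' S) ≤ f x₀ := sInf_le ⟨x₀, hx₀S, rfl⟩
    have hnb : sInf (f '' S) ≠ ⊥ := fun h => by simp [h] at h1
    have hnt : sInf (f '' S) ≠ ⊤ := fun h => hx₀ (top_le_iff.mp (h ▸ h2))
    lift (sInf (f '' S)) to ℝ using ⟨hnt, hnb⟩ with m hm
    exact ⟨m, rfl⟩
  constructor
  · -- forward direction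
    rintro ⟨-, hne0, hcomp0, hminseq⟩
    rw [ENNReal.tendsto_nhds_zero]
    intro ε hε
    obtain ⟨r, hr0, hrε⟩ : ∃ r : ℝ, 0 < r ∧ ENNReal.ofReal r ≤ ε := by
      rcases eq_or_ne ε ⊤ with rfl | hεt
      · exact ⟨1, one_pos, le_top⟩
      · exact ⟨ε.toReal, ENNReal.toReal_pos hε.ne' hεt, ENNReal.ofReal_toReal_le⟩
    -- find t with Ω(t) in the (r/3)-neighborhood of the solution set
    have hclaim : ∃ t : ℝ, 0 < t ∧
        ∀ x ∈ OmegaSet f S t, Metric.infDist x (OmegaSet f S 0) ≤ r / 3 := by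
      by_contra h
      push_neg at h
      choose x hx1 hx2 using fun n : ℕ => h (1 / (n + 1)) (by positivity)
      have hlow : ∀ n, sInf (f '' S) ≤ f (x n) := fun n => sInf_le ⟨x n, (hx1 n).1, rfl⟩
      have hup : ∀ n : ℕ, f (x n) ≤ (((m + 1 / (n + 1) : ℝ)) : EReal) := by
        intro n
        have h2 := (hx1 n).2
        rwa [hm, ← EReal.coe_add] at h2
      have htu : Tendsto (fun n : ℕ => (((m + 1 / (n + 1) : ℝ)) : EReal)) atTop
          (𝓝 ((m : ℝ) : EReal)) := by
        rw [EReal.tendsto_coe]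
        simpa using (tendsto_const_nhds (x := m)).add tendsto_one_div_add_atTop_nhds_zero_nat
      have htf : Tendsto (fun n => f (x n)) atTop (𝓝 (sInf (f '' S))) := by
        rw [hm]
        exact tendsto_of_tendsto_of_tendsto_of_le_of_le tendsto_const_nhds htu
          (fun n => hm ▸ hlow n) hup
      have hd := hminseq x (fun n => (hx1 n).1) htf
      obtain ⟨n, hn⟩ := (hd.eventually_lt_const (by positivity : (0:ℝ) < r / 3)).exists
      exact absurd hn (not_lt.mpr (hx2 n).le)
    obtain ⟨t, ht0, hnbhd⟩ := hclaim
    -- finite (r/3)-net of the compact solution set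
    obtain ⟨F, hF, hFsub⟩ := Metric.totallyBounded_iff.mp hcomp0.totallyBounded (r / 3)
      (by positivity)
    have hnet : ∀ s ∈ Set.Ioc (0:ℝ) t, kurIndex (OmegaSet f S s) ≤ ENNReal.ofReal r := by
      intro s hs
      apply sInf_le
      refine ⟨ENNReal.ofReal_pos.mpr hr0, F, hF, fun x hx => ?_⟩
      have hxt : x ∈ OmegaSet f S t := omega_mono hs.2 hx
      have hd : Metric.infDist x (OmegaSet f S 0) < r / 2 :=
        lt_of_le_of_lt (hnbhd x hxt) (by linarith)
      obtain ⟨y, hy0, hyd⟩ := (Metric.infDist_lt_iff hne0).mp hd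
      obtain ⟨z, hzF, hzd⟩ := Set.mem_iUnion₂.mp (hFsub hy0)
      refine ⟨z, hzF, ?_⟩
      apply ENNReal.ofReal_le_ofReal
      have : dist x z ≤ dist x y + dist y z := dist_triangle x y z
      rw [Metric.mem_ball] at hzd
      linarith
    filter_upwards [Ioc_mem_nhdsGT_of_mem (Set.mem_Ico.mpr ⟨le_refl (0:ℝ), ht0⟩)] with s hs
    exact (hnet s hs).trans hrε
  · -- backward direction
    intro htend
    have K := key_net htend
    have hcl0 : IsClosed (OmegaSet f S 0) := omega_closed hScl hlsc 0
    have htb0 : TotallyBounded (OmegaSet f S 0) := by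
      rw [Metric.totallyBounded_iff]
      intro ε hε
      obtain ⟨t, ht, F, hF, hFnet⟩ := K ε hε
      refine ⟨F, hF, fun x hx => ?_⟩
      obtain ⟨y, hyF, hyd⟩ := hFnet x (omega_mono ht.le hx)
      exact Set.mem_biUnion hyF hyd
    have hcomp0 : IsCompact (OmegaSet f S 0) :=
      TotallyBounded.isCompact_of_isClosed htb0 hcl0
    -- nonempty
    have hne0 : (OmegaSet f S 0).Nonempty := by
      choose x hx using fun n : ℕ => omega_nonempty (f := f) (S := S) hm
        (t := 1 / (n + 1)) (by positivity)
      have hmin : ∀ t : ℝ, 0 < t →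
          ∀ᶠ n in atTop, f (x n) ≤ sInf (f '' S) + (t : EReal) := by
        intro t ht
        have hev : ∀ᶠ n : ℕ in atTop, (1 : ℝ) / (n + 1) ≤ t := by
          have := tendsto_one_div_add_atTop_nhds_zero_nat (𝕜 := ℝ)
          exact this.eventually_le_const ht
        filter_upwards [hev] with n hn
        exact (hx n).2.trans (add_le_add le_rfl (EReal.coe_le_coe_iff.mpr hn))
      obtain ⟨x₀, hx₀, -⟩ := exists_subseq hScl hlsc hm K x (fun n => (hx n).1) hmin
      exact ⟨x₀, hx₀⟩
    refine ⟨⟨m, hm⟩, hne0, hcomp0, ?_⟩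
    -- minimizing sequences
    intro u hu htendf
    by_contra hnot
    rw [Metric.tendsto_atTop] at hnot
    push_neg at hnot
    obtain ⟨ε, hε, hfreq⟩ := hnot
    have hfreq' : ∃ᶠ n in atTop, ε ≤ Metric.infDist (u n) (OmegaSet f S 0) := by
      rw [frequently_atTop]
      intro N
      obtain ⟨n, hnN, hn⟩ := hfreq N
      refine ⟨n, hnN, ?_⟩
      rw [Real.dist_eq, sub_zero, abs_of_nonneg (Metric.infDist_nonneg)] at hn
      exact hn
    obtain ⟨φ, hφ, hφge⟩ := Filter.extraction_of_frequently_atTop hfreq'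
    have hmin : ∀ t : ℝ, 0 < t →
        ∀ᶠ n in atTop, f (u (φ n)) ≤ sInf (f '' S) + (t : EReal) := by
      intro t ht
      have hlt : sInf (f '' S) < sInf (f '' S) + (t : EReal) := by
        rw [hm, ← EReal.coe_add]
        exact_mod_cast by linarith
      have hev : ∀ᶠ n in atTop, f (u n) < sInf (f '' S) + (t : EReal) :=
        htendf (isOpen_Iio.mem_nhds hlt)
      exact ((hφ.tendsto_atTop).eventually hev).mono (fun n h => h.le)
    obtain ⟨x₀, hx₀, ψ, hψ, htendψ⟩ :=
      exists_subseq hScl hlsc hm K (u ∘ φ) (fun n => hu (φ n)) hmin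
    have hdist : Tendsto (fun k => dist (u (φ (ψ k))) x₀) atTop (𝓝 0) :=
      tendsto_iff_dist_tendsto_zero.mp htendψ
    have hev : ∀ᶠ k in atTop, dist (u (φ (ψ k))) x₀ < ε :=
      hdist.eventually_lt_const hε
    obtain ⟨k, hk⟩ := hev.exists
    have : ε ≤ Metric.infDist (u (φ (ψ k))) (OmegaSet f S 0) := hφge (ψ k)
    have hle : Metric.infDist (u (φ (ψ k))) (OmegaSet f S 0) ≤ dist (u (φ (ψ k))) x₀ :=
      Metric.infDist_le_dist_of_mem hx₀
    linarith
end

section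
/- Let M be a non-degenerate Orlicz function. Then M satisfies the Δ₂ condition at zero if and only if σ_M has a strong minimum at 0 on ℓ_M, i.e. the problem of minimizing σ_M over ℓ_M is Tikhonov well-posed: inf_{ℓ_M} σ_M = σ_M(0) = 0, the point 0 is the unique minimizer, and every sequence (x^k) in ℓ_M with σ_M(x^k) → 0 satisfies ‖x^k‖ → 0. -/
open Filter Topology

/-- `σ_M(x) = Σ_{n} M(|x_n|) ∈ [0,∞]`. -/
noncomputable def sigmaM (M : ℝ → ℝ) (x : ℕ → ℝ) : ENNReal :=
  ∑' n, ENNReal.ofReal (M |x n|)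

/-- Membership in the Orlicz sequence space `ℓ_M`: `x` is a bounded sequence with
`σ_M(x/ρ) < ∞` for some `ρ > 0`. -/
def MemLM (M : ℝ → ℝ) (x : ℕ → ℝ) : Prop :=
  (∃ A : ℝ, ∀ n, |x n| ≤ A) ∧ ∃ ρ > 0, sigmaM M (fun n => x n / ρ) ≠ ⊤

/-- The Luxemburg norm `‖x‖ = inf {ρ > 0 : σ_M(x/ρ) ≤ 1}`. -/
noncomputable def luxNorm (M : ℝ → ℝ) (x : ℕ → ℝ) : ℝ :=
  sInf {ρ : ℝ | 0 < ρ ∧ sigmaM M (fun n => x n / ρ) ≤ 1}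

/-- An Orlicz function: continuous, non-decreasing, convex on `[0,∞)`, `M(0) = 0` and
`M(t) → ∞` as `t → ∞`. -/
structure IsOrliczFunction (M : ℝ → ℝ) : Prop where
  continuousOn : ContinuousOn M (Set.Ici 0)
  monotoneOn : MonotoneOn M (Set.Ici 0)
  convexOn : ConvexOn ℝ (Set.Ici 0) M
  map_zero : M 0 = 0
  tendsto_atTop : Tendsto M atTop atTop

/-- `M` satisfies the `Δ₂` condition at zero: `liminf_{t↓0} M(t)/M(2t) > 0`. -/
def Delta2Zero (M : ℝ → ℝ) : Prop :=
  0 < liminf (fun t => M t / M (2 * t)) (𝓝[>] (0 : ℝ))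

/-- `g_a(x) = Σ_n a_n M(|x_n|)`. -/
noncomputable def gA (M : ℝ → ℝ) (a : ℕ → ℝ) (x : ℕ → ℝ) : ℝ :=
  ∑' n, a n * M |x n|

section StrongMinAux
variable {M : ℝ → ℝ}

lemma M_nonneg (hM : IsOrliczFunction M) {t : ℝ} (ht : 0 ≤ t) : 0 ≤ M t := by
  rw [← hM.map_zero]
  exact hM.monotoneOn (Set.mem_Ici.2 le_rfl) (Set.mem_Ici.2 ht) ht

lemma M_mono (hM : IsOrliczFunction M) {s t : ℝ} (hs : 0 ≤ s) (hst : s ≤ t) : M s ≤ M t :=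
  hM.monotoneOn (Set.mem_Ici.2 hs) (Set.mem_Ici.2 (hs.trans hst)) hst

lemma sigma_indicator (hM : IsOrliczFunction M) (N : ℕ) {s : ℝ} (hs : 0 ≤ s) :
    sigmaM M (fun n => if n < N then s else 0) = N * ENNReal.ofReal (M s) := by
  unfold sigmaM
  rw [tsum_eq_sum (s := Finset.range N)
    (by intro n hn; simp only [Finset.mem_range, not_lt] at hn
        simp [if_neg (not_lt.2 hn), hM.map_zero])]
  rw [Finset.sum_congr rfl (fun n hn => by
    simp only [Finset.mem_range] at hn
    show ENNReal.ofReal (M |if n < N then s else 0|) = ENNReal.ofReal (M s)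
    rw [if_pos hn, abs_of_nonneg hs])]
  simp [Finset.sum_const, nsmul_eq_mul]

lemma reverse (hM : IsOrliczFunction M) (hnd : ∀ t > (0:ℝ), 0 < M t)
    (H : ∀ x : ℕ → ℕ → ℝ, (∀ k, MemLM M (x k)) →
      Tendsto (fun k => sigmaM M (x k)) atTop (𝓝 0) →
      Tendsto (fun k => luxNorm M (x k)) atTop (𝓝 0)) :
    Delta2Zero M := by
  by_contra hΔ
  set f : ℝ → ℝ := fun t => M t / M (2 * t) with hf
  have hle0 : liminf f (𝓝[>] (0:ℝ)) ≤ 0 := not_lt.1 hΔ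
  have hble : ∀ᶠ t in 𝓝[>] (0:ℝ), f t ≤ 1 := by
    filter_upwards [self_mem_nhdsWithin] with s hs
    have hs0 : (0:ℝ) < s := hs
    exact div_le_one_of_le₀ (M_mono hM hs0.le (by linarith)) (M_nonneg hM (by linarith))
  have hMcont : Tendsto M (𝓝[>] (0:ℝ)) (𝓝 0) := by
    have h := hM.continuousOn 0 Set.self_mem_Ici
    rw [ContinuousWithinAt, hM.map_zero] at h
    exact h.mono_left (nhdsWithin_mono _ Set.Ioi_subset_Ici_self)
  have hkey : ∀ k : ℕ, ∃ s : ℝ, 0 < s ∧ M s < 1 / 2 ^ (k+1) ∧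
      M s / M (2 * s) < 1 / 8 ^ (k+1) := by
    intro k
    have hfreq : ∃ᶠ s in 𝓝[>] (0:ℝ), f s < 1 / 8 ^ (k+1) :=
      frequently_lt_of_liminf_lt (isCoboundedUnder_ge_of_eventually_le _ hble)
        (lt_of_le_of_lt hle0 (by positivity))
    have hev1 : ∀ᶠ s in 𝓝[>] (0:ℝ), M s < 1 / 2 ^ (k+1) :=
      hMcont.eventually_lt_const (by positivity)
    obtain ⟨s, h3, h1, h2⟩ :=
      (hfreq.and_eventually (hev1.and self_mem_nhdsWithin)).exists
    exact ⟨s, h2, h1, h3⟩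
  choose t ht1 ht2 ht3 using hkey
  set nk : ℕ → ℕ := fun k => ⌊1 / (2 ^ k * M (t k))⌋₊ with hnk
  have hMt : ∀ k, 0 < M (t k) := fun k => hnd _ (ht1 k)
  have hM2t : ∀ k, 0 < M (2 * t k) := fun k => hnd _ (by linarith [ht1 k])
  have hbig : ∀ k, 8 ^ (k+1) * M (t k) < M (2 * t k) := by
    intro k
    have h := ht3 k
    rw [div_lt_div_iff₀ (hM2t k) (by positivity)] at h
    nlinarith [h]
  have ha2 : ∀ k, 2 < 1 / (2 ^ k * M (t k)) := by
    intro k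
    have hp : (0:ℝ) < 2 ^ k * M (t k) := mul_pos (by positivity) (hMt k)
    rw [lt_div_iff₀ hp]
    have h := ht2 k
    have h2 : (2:ℝ) ^ (k+1) = 2 * 2 ^ k := by ring
    rw [lt_div_iff₀ (by positivity : (0:ℝ) < 2 ^ (k+1))] at h
    nlinarith [pow_pos (show (0:ℝ) < 2 by norm_num) k]
  have key1 : ∀ k, (nk k : ℝ) * M (t k) ≤ 1 / 2 ^ k := by
    intro k
    have hle := Nat.floor_le (a := 1 / (2 ^ k * M (t k)))
      (le_of_lt (one_div_pos.2 (mul_pos (pow_pos two_pos k) (hMt k))))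
    have := mul_le_mul_of_nonneg_right hle (hMt k).le
    have hrhs : 1 / (2 ^ k * M (t k)) * M (t k) = 1 / 2 ^ k := by
      rw [one_div, mul_inv, mul_assoc, inv_mul_cancel₀ (hMt k).ne', mul_one]
      exact (one_div _).symm
    rw [hrhs] at this
    exact this
  have key2 : ∀ k, 1 / 2 ^ (k+1) ≤ (nk k : ℝ) * M (t k) := by
    intro k
    have hgt := Nat.sub_one_lt_floor (1 / (2 ^ k * M (t k)))
    have h2 := ha2 k
    have hhalf : 1 / (2 ^ k * M (t k)) / 2 ≤ (nk k : ℝ) := by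
      rw [hnk]; push_cast; linarith
    have := mul_le_mul_of_nonneg_right hhalf (hMt k).le
    have hlhs : 1 / (2 ^ k * M (t k)) / 2 * M (t k) = 1 / 2 ^ (k+1) := by
      have h2' : (2:ℝ) ^ (k+1) = 2 ^ k * 2 := by ring
      rw [h2', div_div, mul_comm (2 ^ k * M (t k)) 2, one_div, mul_inv, mul_inv,
        mul_assoc, mul_assoc, inv_mul_cancel₀ (hMt k).ne', mul_one, one_div, mul_inv]
      ring
    rw [hlhs] at this
    exact this
  have hnkpos : ∀ k, 0 < (nk k : ℝ) := by
    intro k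
    have := ha2 k
    have h := Nat.sub_one_lt_floor (1 / (2 ^ k * M (t k)))
    rw [hnk]; push_cast; linarith
  have key3 : ∀ k, 1 < (nk k : ℝ) * M (2 * t k) := by
    intro k
    have h84 : (8:ℝ) ^ (k+1) = 4 ^ (k+1) * 2 ^ (k+1) := by
      rw [← mul_pow]; norm_num
    have h4 : (1:ℝ) ≤ 4 ^ (k+1) := one_le_pow₀ (by norm_num)
    have hb := hbig k
    have h2 := key2 k
    have hp : (0:ℝ) < 2 ^ (k+1) := by positivity
    have e1 : (8:ℝ) ^ (k+1) * (1 / 2 ^ (k+1)) = 4 ^ (k+1) := by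
      rw [h84]; field_simp
    nlinarith [mul_lt_mul_of_pos_left hb (hnkpos k),
      mul_le_mul_of_nonneg_left h2 (pow_nonneg (by norm_num : (0:ℝ) ≤ 8) (k+1)), e1, h4]
  -- the sequence
  set x : ℕ → ℕ → ℝ := fun k n => if n < nk k then t k else 0 with hx
  have hσval : ∀ k, sigmaM M (x k) = (nk k) * ENNReal.ofReal (M (t k)) := by
    intro k
    exact sigma_indicator hM (nk k) (ht1 k).le
  have hmem : ∀ k, MemLM M (x k) := by
    intro k
    constructor
    · exact ⟨t k, fun n => by
        show |if n < nk k then t k else 0| ≤ t k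
        split
        · rw [abs_of_nonneg (ht1 k).le]
        · rw [abs_zero]; exact (ht1 k).le⟩
    · refine ⟨1, one_pos, ?_⟩
      have : (fun n => x k n / 1) = x k := by funext n; rw [div_one]
      rw [this, hσval k]
      exact ENNReal.mul_ne_top (ENNReal.natCast_ne_top _) ENNReal.ofReal_ne_top
  have hσ : Tendsto (fun k => sigmaM M (x k)) atTop (𝓝 0) := by
    have hub : ∀ k, sigmaM M (x k) ≤ ENNReal.ofReal ((1/2:ℝ) ^ k) := by
      intro k
      rw [hσval k, ← ENNReal.ofReal_natCast, ← ENNReal.ofReal_mul (Nat.cast_nonneg _)]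
      apply ENNReal.ofReal_le_ofReal
      calc (nk k : ℝ) * M (t k) ≤ 1 / 2 ^ k := key1 k
        _ = (1/2:ℝ) ^ k := by rw [div_pow]; norm_num
    have h0 : Tendsto (fun k : ℕ => ENNReal.ofReal ((1/2:ℝ) ^ k)) atTop (𝓝 0) := by
      rw [show (0:ENNReal) = ENNReal.ofReal 0 by simp]
      exact (ENNReal.continuous_ofReal.tendsto 0).comp
        (tendsto_pow_atTop_nhds_zero_of_lt_one (by norm_num) (by norm_num))
    exact tendsto_of_tendsto_of_tendsto_of_le_of_le tendsto_const_nhds h0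
      (fun k => zero_le) hub
  have hlux : ∀ k, (1/2 : ℝ) ≤ luxNorm M (x k) := by
    intro k
    apply le_csInf
    · refine ⟨1, one_pos, ?_⟩
      have he : (fun n => x k n / 1) = x k := by funext n; rw [div_one]
      rw [he, hσval k, ← ENNReal.ofReal_natCast, ← ENNReal.ofReal_mul (Nat.cast_nonneg _)]
      calc ENNReal.ofReal ((nk k : ℝ) * M (t k)) ≤ ENNReal.ofReal (1 / 2 ^ k) :=
            ENNReal.ofReal_le_ofReal (key1 k)
        _ ≤ ENNReal.ofReal 1 := ENNReal.ofReal_le_ofReal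
            (by rw [div_le_one (by positivity)]; exact one_le_pow₀ (by norm_num))
        _ = 1 := ENNReal.ofReal_one
    · intro ρ hρ
      by_contra hρ2
      push_neg at hρ2
      obtain ⟨hρ0, hρ1⟩ := hρ
      have hxρ : (fun n => x k n / ρ) = fun n => if n < nk k then t k / ρ else 0 := by
        funext n
        show (if n < nk k then t k else 0) / ρ = if n < nk k then t k / ρ else 0
        split <;> simp
      have hσρ : sigmaM M (fun n => x k n / ρ) =
          (nk k) * ENNReal.ofReal (M (t k / ρ)) := by
        rw [hxρ]; exact sigma_indicator hM (nk k) (div_pos (ht1 k) hρ0).le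
      have h2t : 2 * t k ≤ t k / ρ := by
        rw [le_div_iff₀ hρ0]
        nlinarith [ht1 k]
      have hMle : M (2 * t k) ≤ M (t k / ρ) := M_mono hM (by linarith [ht1 k]) h2t
      have hgt : (1:ENNReal) < sigmaM M (fun n => x k n / ρ) := by
        rw [hσρ, ← ENNReal.ofReal_natCast, ← ENNReal.ofReal_mul (Nat.cast_nonneg _)]
        rw [show (1:ENNReal) = ENNReal.ofReal 1 from ENNReal.ofReal_one.symm]
        rw [ENNReal.ofReal_lt_ofReal_iff (by nlinarith [key3 k, hnkpos k, hMt k])]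
        nlinarith [key3 k, hnkpos k]
      exact absurd hρ1 (not_le.2 hgt)
  have hcontr := (H x hmem hσ).eventually_lt_const (by norm_num : (0:ℝ) < 1/2)
  obtain ⟨k, hk⟩ := hcontr.exists
  linarith [hlux k]

lemma delta2_pow (hM : IsOrliczFunction M) {δ K : ℝ} (hδ : 0 < δ) (hK : 0 ≤ K)
    (h : ∀ t, 0 ≤ t → t < δ → M (2 * t) ≤ K * M t) :
    ∀ m : ℕ, ∀ t, 0 ≤ t → 2 ^ m * t ≤ δ → M (2 ^ m * t) ≤ K ^ m * M t := by
  intro m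
  induction m with
  | zero => intro t ht _; simp
  | succ m ih =>
    intro t ht hle
    have h2 : (0:ℝ) < 2 ^ m := by positivity
    have hs : 0 ≤ 2 ^ m * t := by positivity
    have hpow : (2:ℝ) ^ (m+1) = 2 * 2 ^ m := by ring
    have hlt : 2 ^ m * t < δ := by nlinarith
    calc M (2 ^ (m+1) * t) = M (2 * (2 ^ m * t)) := by ring_nf
      _ ≤ K * M (2 ^ m * t) := h _ hs hlt
      _ ≤ K * (K ^ m * M t) := mul_le_mul_of_nonneg_left (ih t ht hlt.le) hK
      _ = K ^ (m+1) * M t := by ring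

lemma forward (hM : IsOrliczFunction M) (hnd : ∀ t > (0:ℝ), 0 < M t) (hΔ : Delta2Zero M)
    (x : ℕ → ℕ → ℝ)
    (hσ : Tendsto (fun k => sigmaM M (x k)) atTop (𝓝 0)) :
    Tendsto (fun k => luxNorm M (x k)) atTop (𝓝 0) := by
  set f : ℝ → ℝ := fun t => M t / M (2 * t) with hf
  have hL : 0 < liminf f (𝓝[>] (0:ℝ)) := hΔ
  have hge : ∀ᶠ t in 𝓝[>] (0:ℝ), 0 ≤ f t := by
    filter_upwards [self_mem_nhdsWithin] with t ht
    have ht0 : (0:ℝ) < t := ht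
    exact div_nonneg (M_nonneg hM ht0.le) (M_nonneg hM (by linarith))
  have hev : ∀ᶠ t in 𝓝[>] (0:ℝ), liminf f (𝓝[>] (0:ℝ)) / 2 < f t :=
    eventually_lt_of_lt_liminf (half_lt_self hL)
      (isBoundedUnder_of_eventually_ge hge)
  set c : ℝ := liminf f (𝓝[>] (0:ℝ)) / 2 with hc
  have hc0 : 0 < c := half_pos hL
  obtain ⟨δ, hδ0, hδ⟩ := mem_nhdsGT_iff_exists_Ioo_subset.1 hev
  have hδ0 : (0:ℝ) < δ := hδ0
  set K : ℝ := c⁻¹ with hKdef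
  have hK0 : 0 < K := inv_pos.2 hc0
  have hKey : ∀ t, 0 ≤ t → t < δ → M (2 * t) ≤ K * M t := by
    intro t ht hlt
    rcases eq_or_lt_of_le ht with h0 | h0
    · rw [← h0]; norm_num [hM.map_zero]
    · have hmem : t ∈ Set.Ioo (0:ℝ) δ := ⟨h0, hlt⟩
      have hct : c < M t / M (2 * t) := hδ hmem
      have h2t : 0 < M (2 * t) := hnd _ (by linarith)
      rw [lt_div_iff₀ h2t] at hct
      rw [hKdef, ← div_eq_inv_mul, le_div_iff₀ hc0]
      linarith [hct]
  -- main argument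
  rw [Metric.tendsto_atTop]
  intro ε hε
  obtain ⟨m, hm⟩ := pow_unbounded_of_one_lt (2 / ε) (by norm_num : (1:ℝ) < 2)
  have h2m : (0:ℝ) < 2 ^ m := by positivity
  set β : ℝ := δ / 2 ^ m with hβdef
  have hβ : 0 < β := div_pos hδ0 h2m
  have hMβ : 0 < M β := hnd _ hβ
  set η : ENNReal := min (ENNReal.ofReal (M β) / 2) ((ENNReal.ofReal (K ^ m))⁻¹) with hηdef
  have hKm0 : ENNReal.ofReal (K ^ m) ≠ 0 := by
    simp [ENNReal.ofReal_eq_zero, not_le, pow_pos hK0 m]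
  have hη : 0 < η := by
    apply lt_min
    · exact ENNReal.div_pos (by simp [ENNReal.ofReal_eq_zero, not_le, hMβ]) (by norm_num)
    · exact ENNReal.inv_pos.2 ENNReal.ofReal_ne_top
  obtain ⟨N, hN⟩ := eventually_atTop.1 ((ENNReal.tendsto_nhds_zero.1 hσ) η hη)
  refine ⟨N, fun k hk => ?_⟩
  have hσk : sigmaM M (x k) ≤ η := hN k hk
  -- every coordinate is < β
  have hsmall : ∀ n, |x k n| < β := by
    intro n
    by_contra hge'
    push_neg at hge'
    have h1 : ENNReal.ofReal (M β) ≤ ENNReal.ofReal (M |x k n|) :=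
      ENNReal.ofReal_le_ofReal (M_mono hM hβ.le hge')
    have h2 : ENNReal.ofReal (M |x k n|) ≤ sigmaM M (x k) := ENNReal.le_tsum n
    have h3 : sigmaM M (x k) < ENNReal.ofReal (M β) :=
      lt_of_le_of_lt (hσk.trans (min_le_left _ _))
        (ENNReal.half_lt_self (by simp [ENNReal.ofReal_eq_zero, not_le, hMβ])
          ENNReal.ofReal_ne_top)
    exact absurd ((h1.trans h2).trans_lt h3) (lt_irrefl _)
  -- σ_M (x k / (ε/2)) ≤ 1
  have hεpos : (0:ℝ) < ε / 2 := half_pos hε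
  have hbound : sigmaM M (fun n => x k n / (ε / 2)) ≤ 1 := by
    have hterm : ∀ n, ENNReal.ofReal (M |x k n / (ε / 2)|) ≤
        ENNReal.ofReal (K ^ m) * ENNReal.ofReal (M |x k n|) := by
      intro n
      rw [← ENNReal.ofReal_mul (by positivity)]
      apply ENNReal.ofReal_le_ofReal
      have habs : |x k n / (ε / 2)| = |x k n| / (ε / 2) := by
        rw [abs_div, abs_of_pos hεpos]
      have h1 : |x k n| / (ε / 2) ≤ 2 ^ m * |x k n| := by
        have h := mul_le_mul_of_nonneg_left hm.le (abs_nonneg (x k n))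
        calc |x k n| / (ε / 2) = |x k n| * (2 / ε) := by
              rw [div_div_eq_mul_div, div_eq_mul_inv, div_eq_mul_inv, mul_assoc]
          _ ≤ |x k n| * 2 ^ m := h
          _ = 2 ^ m * |x k n| := mul_comm _ _
      have h2 : 2 ^ m * |x k n| ≤ δ := by
        have := (hsmall n).le
        rw [hβdef, le_div_iff₀ h2m] at this
        linarith
      calc M |x k n / (ε / 2)| = M (|x k n| / (ε / 2)) := by rw [habs]
        _ ≤ M (2 ^ m * |x k n|) := M_mono hM (by positivity) h1
        _ ≤ K ^ m * M |x k n| := delta2_pow hM hδ0 hK0.le hKey m _ (abs_nonneg _) h2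
    calc sigmaM M (fun n => x k n / (ε / 2))
        ≤ ∑' n, ENNReal.ofReal (K ^ m) * ENNReal.ofReal (M |x k n|) :=
          ENNReal.tsum_le_tsum hterm
      _ = ENNReal.ofReal (K ^ m) * sigmaM M (x k) := ENNReal.tsum_mul_left
      _ ≤ ENNReal.ofReal (K ^ m) * (ENNReal.ofReal (K ^ m))⁻¹ :=
          mul_le_mul_right (hσk.trans (min_le_right _ _)) _
      _ = 1 := ENNReal.mul_inv_cancel hKm0 ENNReal.ofReal_ne_top
  have hlux_le : luxNorm M (x k) ≤ ε / 2 := by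
    apply csInf_le ⟨0, fun ρ hρ => hρ.1.le⟩
    exact ⟨hεpos, hbound⟩
  have hlux_nonneg : 0 ≤ luxNorm M (x k) :=
    Real.sInf_nonneg (fun ρ hρ => hρ.1.le)
  rw [Real.dist_eq, sub_zero, abs_of_nonneg hlux_nonneg]
  linarith

end StrongMinAux

/-- A non-degenerate Orlicz function `M` satisfies `Δ₂` at zero iff `σ_M` has a strong
minimum at `0` on `ℓ_M`: `σ_M(0) = 0` is the infimum, `0` is the unique minimizer, and
every sequence `(x^k) ⊆ ℓ_M` with `σ_M(x^k) → 0` satisfies `‖x^k‖ → 0`. -/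

theorem stmt3 (M : ℝ → ℝ) (hM : IsOrliczFunction M) (hnd : ∀ t > (0 : ℝ), 0 < M t) :
    Delta2Zero M ↔
      (sigmaM M (fun _ => 0) = 0 ∧
       (∀ x, MemLM M x → sigmaM M x = 0 → x = fun _ => 0) ∧
       (∀ x : ℕ → ℕ → ℝ, (∀ k, MemLM M (x k)) →
         Tendsto (fun k => sigmaM M (x k)) atTop (𝓝 0) →
         Tendsto (fun k => luxNorm M (x k)) atTop (𝓝 0))) := by
  constructor
  · intro hΔ
    refine ⟨?_, ?_, ?_⟩
    · simp [sigmaM, hM.map_zero]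
    · intro x _ hσ
      funext n
      show x n = 0
      by_contra hne
      have habs : 0 < |x n| := abs_pos.2 hne
      have hpos := hnd _ habs
      have h0 : ENNReal.ofReal (M |x n|) = 0 := ENNReal.tsum_eq_zero.1 hσ n
      rw [ENNReal.ofReal_eq_zero] at h0
      linarith
    · intro x _ hσ
      exact forward hM hnd hΔ x hσ
  · rintro ⟨-, -, H⟩
    exact reverse hM hnd H
end

section
/- Let M be a non-degenerate Orlicz function satisfying the Δ₂ condition at zero. Then the canonical unit vectors form a Schauder basis of ℓ_M in the following sense: for every x = (x_n) ∈ ℓ_M, ‖x − Σ_{i=1}^N x_i e_i‖ → 0 as N → ∞, where e_i denotes the i-th canonical unit sequence and the Luxemburg norm is used. -/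
open Filter Topology

/-- If `M` is a non-degenerate Orlicz function with `Δ₂` at zero, then the canonical unit
vectors form a Schauder basis of `ℓ_M`: for every `x ∈ ℓ_M` the tail
`x - Σ_{i<N} x_i e_i` tends to `0` in the Luxemburg norm as `N → ∞`. -/
theorem stmt6 (M : ℝ → ℝ) (hM : IsOrliczFunction M) (hnd : ∀ t > (0 : ℝ), 0 < M t)
    (hΔ : Delta2Zero M) :
    ∀ x : ℕ → ℝ, MemLM M x →
      Tendsto (fun N : ℕ => luxNorm M (fun i => if i < N then 0 else x i)) atTop (𝓝 0) := by
  intro x hx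
  obtain ⟨⟨A, hA⟩, ρ₀, hρ₀, hσ⟩ := hx
  -- M is nonnegative on [0, ∞)
  have hMnn : ∀ t : ℝ, 0 ≤ t → 0 ≤ M t := fun t ht => by
    have := hM.monotoneOn (Set.mem_Ici.mpr le_rfl) (Set.mem_Ici.mpr ht) ht
    rwa [hM.map_zero] at this
  -- Extract Δ₂ constants: ∃ c > 0, δ > 0, ∀ t ∈ (0, δ), M (2t) ≤ c⁻¹ * M t
  obtain ⟨c, hc, δ, hδ, hstep⟩ :
      ∃ c > (0 : ℝ), ∃ δ > (0 : ℝ), ∀ t : ℝ, 0 < t → t < δ → M (2 * t) ≤ c⁻¹ * M t := by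
    unfold Delta2Zero at hΔ
    set L := liminf (fun t => M t / M (2 * t)) (𝓝[>] (0 : ℝ)) with hL
    have hL2 : (0 : ℝ) < L / 2 := by linarith
    have hbd : IsBoundedUnder (· ≥ ·) (𝓝[>] (0 : ℝ))
        (fun t => M t / M (2 * t)) := by
      refine ⟨0, eventually_map.mpr ?_⟩
      filter_upwards [self_mem_nhdsWithin] with t ht
      have ht' : (0:ℝ) < t := Set.mem_Ioi.mp ht
      exact div_nonneg (hMnn t ht'.le) (hMnn _ (by linarith))
    have hev : ∀ᶠ t in 𝓝[>] (0 : ℝ), L / 2 < M t / M (2 * t) := by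
      apply eventually_lt_of_lt_liminf _ hbd
      linarith
    rw [eventually_nhdsWithin_iff] at hev
    rw [Metric.eventually_nhds_iff] at hev
    obtain ⟨δ, hδ, hev⟩ := hev
    refine ⟨L / 2, hL2, δ, hδ, fun t ht htδ => ?_⟩
    have h1 : L / 2 < M t / M (2 * t) := by
      apply hev _ ht
      rw [Real.dist_eq, sub_zero, abs_of_pos ht]; exact htδ
    have h2 : 0 < M (2 * t) := hnd _ (by positivity)
    rw [lt_div_iff₀ h2] at h1
    rw [inv_mul_eq_div, le_div_iff₀ hL2]
    nlinarith
  have hcinv : (0 : ℝ) < c⁻¹ := by positivity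
  -- Iteration of the Δ₂ step
  have hiter : ∀ k : ℕ, ∀ s : ℝ, 0 ≤ s → 2 ^ k * s < 2 * δ →
      M (2 ^ k * s) ≤ c⁻¹ ^ k * M s := by
    intro k
    induction k with
    | zero => intro s hs _; simp
    | succ k ih =>
      intro s hs hlt
      rcases eq_or_lt_of_le hs with h0 | h0
      · rw [← h0]
        simp [hM.map_zero]
      · have h2k : (0 : ℝ) < 2 ^ k * s := by positivity
        have hle : 2 ^ k * s < δ := by
          have : (2 : ℝ) ^ (k + 1) * s = 2 * (2 ^ k * s) := by ring
          rw [this] at hlt; linarith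
        have e1 : (2 : ℝ) ^ (k + 1) * s = 2 * (2 ^ k * s) := by ring
        calc M (2 ^ (k + 1) * s) = M (2 * (2 ^ k * s)) := by rw [e1]
          _ ≤ c⁻¹ * M (2 ^ k * s) := hstep _ h2k hle
          _ ≤ c⁻¹ * (c⁻¹ ^ k * M s) := by
              apply mul_le_mul_of_nonneg_left _ (le_of_lt hcinv)
              exact ih s hs (by nlinarith)
          _ = c⁻¹ ^ (k + 1) * M s := by ring
  -- The summable reference sequence
  set g : ℕ → ℝ := fun n => M |x n / ρ₀| with hg
  have hgnn : ∀ n, 0 ≤ g n := fun n => hMnn _ (abs_nonneg _)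
  have hgsum : Summable g := by
    have := ENNReal.summable_toReal hσ
    refine this.congr fun n => ?_
    rw [ENNReal.toReal_ofReal (hMnn _ (abs_nonneg _))]
  -- g n → 0, hence |x n| → 0
  have hg0 : Tendsto g atTop (𝓝 0) := hgsum.tendsto_atTop_zero
  have hxsmall : ∀ τ > (0 : ℝ), ∀ᶠ n in atTop, |x n| < τ := by
    intro τ hτ
    have hMτ : 0 < M (τ / ρ₀) := hnd _ (by positivity)
    filter_upwards [hg0.eventually (eventually_lt_nhds hMτ)] with n hn
    by_contra hcon
    push_neg at hcon
    have h1 : τ / ρ₀ ≤ |x n / ρ₀| := by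
      rw [abs_div, abs_of_pos hρ₀]
      gcongr
    have h2 := hM.monotoneOn (Set.mem_Ici.mpr (by positivity)) (Set.mem_Ici.mpr (abs_nonneg _)) h1
    have h3 : g n = M |x n / ρ₀| := rfl
    rw [h3] at hn
    linarith
  -- conclude via ε-δ
  rw [Metric.tendsto_atTop]
  intro ε hε
  have hε2 : (0 : ℝ) < ε / 2 := by linarith
  -- choose k with ρ₀ ≤ 2^k * (ε/2)
  obtain ⟨k, hk⟩ : ∃ k : ℕ, ρ₀ / (ε / 2) < 2 ^ k := pow_unbounded_of_one_lt _ one_lt_two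
  have hkε : ρ₀ ≤ 2 ^ k * (ε / 2) := by
    rw [div_lt_iff₀ hε2] at hk; nlinarith
  have h2k : (0 : ℝ) < 2 ^ k := by positivity
  -- threshold for smallness
  have hτ : (0 : ℝ) < δ * (ε / 2) := by positivity
  -- tail sums of g tend to 0
  have htail : Tendsto (fun N : ℕ => ∑' m, g (m + N)) atTop (𝓝 0) := tendsto_sum_nat_add g
  have hck : (0 : ℝ) < c ^ k := by positivity
  obtain ⟨N₁, hN₁⟩ := (hxsmall _ hτ).exists_forall_of_atTop
  obtain ⟨N₂, hN₂⟩ := (htail.eventually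
    (eventually_lt_nhds hck)).exists_forall_of_atTop
  refine ⟨max N₁ N₂, fun N hN => ?_⟩
  have hNN₁ : N₁ ≤ N := le_trans (le_max_left _ _) hN
  have hNN₂ : N₂ ≤ N := le_trans (le_max_right _ _) hN
  -- per-term bound for n ≥ N
  have hterm : ∀ n, N ≤ n → M |x n / (ε / 2)| ≤ c⁻¹ ^ k * g n := by
    intro n hn
    have hxn : |x n| < δ * (ε / 2) := hN₁ n (le_trans hNN₁ hn)
    have e1 : |x n / (ε / 2)| = 2 ^ k * (|x n| / (2 ^ k * (ε / 2))) := by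
      rw [abs_div, abs_of_pos hε2]; field_simp
    have hs : 0 ≤ |x n| / (2 ^ k * (ε / 2)) := by positivity
    have hlt : 2 ^ k * (|x n| / (2 ^ k * (ε / 2))) < 2 * δ := by
      have : 2 ^ k * (|x n| / (2 ^ k * (ε / 2))) = |x n| / (ε / 2) := by field_simp
      rw [this, div_lt_iff₀ hε2]; nlinarith
    calc M |x n / (ε / 2)| = M (2 ^ k * (|x n| / (2 ^ k * (ε / 2)))) := by rw [e1]
      _ ≤ c⁻¹ ^ k * M (|x n| / (2 ^ k * (ε / 2))) := hiter k _ hs hlt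
      _ ≤ c⁻¹ ^ k * g n := by
          apply mul_le_mul_of_nonneg_left _ (by positivity)
          apply hM.monotoneOn (Set.mem_Ici.mpr hs) (Set.mem_Ici.mpr (abs_nonneg _))
          rw [abs_div, abs_of_pos hρ₀]
          apply div_le_div_of_nonneg_left (abs_nonneg _) hρ₀ hkε
  -- the modified sequence
  set y : ℕ → ℝ := fun i => if i < N then 0 else x i with hy
  -- h n := M |y n / (ε/2)|
  set h : ℕ → ℝ := fun n => M |y n / (ε / 2)| with hh
  have hhnn : ∀ n, 0 ≤ h n := fun n => hMnn _ (abs_nonneg _)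
  have hhle : ∀ n, h n ≤ (if n < N then 0 else c⁻¹ ^ k * g n) := by
    intro n
    by_cases hnN : n < N
    · simp only [hh, hy, if_pos hnN, zero_div, abs_zero, hM.map_zero, le_refl]
    · simp only [hh, hy, if_neg hnN]
      exact hterm n (not_lt.mp hnN)
  have hmaj : Summable (fun n => if n < N then (0:ℝ) else c⁻¹ ^ k * g n) := by
    apply Summable.of_nonneg_of_le
      (fun n => ?_) (fun n => ?_) ((hgsum.mul_left (c⁻¹ ^ k)))
    · by_cases hnN : n < N
      · simp only [if_pos hnN]; exact le_refl _
      · simp only [if_neg hnN]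
        exact mul_nonneg (by positivity) (hgnn n)
    · by_cases hnN : n < N
      · simp only [if_pos hnN]
        exact mul_nonneg (by positivity) (hgnn n)
      · simp only [if_neg hnN]; exact le_refl _
  have hhsum : Summable h := Summable.of_nonneg_of_le hhnn hhle hmaj
  -- bound the total sum of h
  have hhsumle : ∑' n, h n ≤ 1 := by
    have e2 : ∑' n, h n = ∑' m, h (m + N) := by
      have := Summable.sum_add_tsum_nat_add N hhsum
      have hz : ∑ i ∈ Finset.range N, h i = 0 := by
        apply Finset.sum_eq_zero
        intro i hi
        rw [Finset.mem_range] at hi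
        simp only [hh, hy, if_pos hi, zero_div, abs_zero, hM.map_zero]
      rw [← this, hz, zero_add]
    rw [e2]
    have hb : ∑' m, h (m + N) ≤ ∑' m, c⁻¹ ^ k * g (m + N) := by
      apply Summable.tsum_le_tsum
      · intro m
        have := hhle (m + N)
        rwa [if_neg (by omega)] at this
      · exact (summable_nat_add_iff N).mpr hhsum
      · exact ((hgsum.mul_left (c⁻¹ ^ k)).comp_injective (add_left_injective N))
    have hb2 : ∑' m, c⁻¹ ^ k * g (m + N) = c⁻¹ ^ k * ∑' m, g (m + N) := by
      rw [tsum_mul_left]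
    have hb3 : ∑' m, g (m + N) ≤ c ^ k := le_of_lt (hN₂ N hNN₂)
    calc ∑' m, h (m + N) ≤ c⁻¹ ^ k * ∑' m, g (m + N) := by rw [← hb2]; exact hb
      _ ≤ c⁻¹ ^ k * c ^ k := by
          apply mul_le_mul_of_nonneg_left hb3 (by positivity)
      _ = 1 := by rw [← mul_pow, inv_mul_cancel₀ (ne_of_gt hc), one_pow]
  -- hence σ_M(y / (ε/2)) ≤ 1
  have hσy : sigmaM M (fun n => y n / (ε / 2)) ≤ 1 := by
    unfold sigmaM
    have : ∑' n, ENNReal.ofReal (M |y n / (ε / 2)|) = ENNReal.ofReal (∑' n, h n) := by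
      rw [ENNReal.ofReal_tsum_of_nonneg hhnn hhsum]
    rw [this]
    exact ENNReal.ofReal_le_one.mpr hhsumle
  -- luxNorm y ≤ ε/2
  have hmem : (ε / 2) ∈ {ρ : ℝ | 0 < ρ ∧ sigmaM M (fun n => y n / ρ) ≤ 1} := ⟨hε2, hσy⟩
  have hbdd : BddBelow {ρ : ℝ | 0 < ρ ∧ sigmaM M (fun n => y n / ρ) ≤ 1} :=
    ⟨0, fun ρ hρ => le_of_lt hρ.1⟩
  have hle : luxNorm M y ≤ ε / 2 := csInf_le hbdd hmem
  have hnn : 0 ≤ luxNorm M y :=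
    Real.sInf_nonneg (fun ρ hρ => le_of_lt hρ.1)
  rw [Real.dist_eq, sub_zero, abs_of_nonneg hnn]
  linarith
end

section
/- Let M be a non-degenerate Orlicz function satisfying the Δ₂ condition at zero, and let S be a nonempty bounded subset of ℓ_M. Then for every ε > 0 there exists δ > 0 such that for every x ∈ S there exists a bounded real sequence a = (a_n) with 0 ≤ a_n ≤ ε for all n, such that g_a(x) ≤ inf_S g_a + δ and α({y ∈ S : g_a(y) ≤ inf_S g_a + 3δ}) ≤ ε. -/
open Filter Topology

/-- The Kuratowski index of non-compactness of `A ⊆ ℓ_M` with respect to the Luxemburg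
norm: the infimum of all `ε > 0` such that `A` admits a finite `ε`-net in `ℓ_M`. -/
noncomputable def kurLM (M : ℝ → ℝ) (A : Set (ℕ → ℝ)) : ENNReal :=
  sInf {ε : ENNReal | 0 < ε ∧ ∃ F : Set (ℕ → ℝ), F.Finite ∧ (∀ y ∈ F, MemLM M y) ∧
    ∀ x ∈ A, ∃ y ∈ F, ENNReal.ofReal (luxNorm M (fun n => x n - y n)) ≤ ε}


section Helpers
variable {M : ℝ → ℝ}

lemma M_lt_imp (hM : IsOrliczFunction M) {s t : ℝ} (hs : 0 ≤ s) (ht : 0 ≤ t)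
    (h : M s < M t) : s ≤ t := by
  by_contra hst
  push_neg at hst
  exact absurd (M_mono hM ht hst.le) (not_le.2 h)

lemma M_small (hM : IsOrliczFunction M) {v : ℝ} (hv : 0 < v) : ∃ s > (0:ℝ), M s ≤ v := by
  have hc : Tendsto M (𝓝[Set.Ici 0] 0) (𝓝 0) := by
    have := hM.continuousOn 0 (Set.mem_Ici.2 le_rfl)
    rwa [ContinuousWithinAt, hM.map_zero] at this
  have hev : ∀ᶠ t in 𝓝[Set.Ici 0] (0:ℝ), M t < v := hc.eventually_lt_const hv
  have hle : 𝓝[Set.Ioi (0:ℝ)] 0 ≤ 𝓝[Set.Ici 0] 0 := nhdsWithin_mono _ Set.Ioi_subset_Ici_self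
  obtain ⟨s, hs1, hs2⟩ := ((hev.filter_mono hle).and self_mem_nhdsWithin).exists
  exact ⟨s, hs2, hs1.le⟩

lemma M_big (hM : IsOrliczFunction M) : ∃ T ≥ (0:ℝ), 2 ≤ M T := by
  obtain ⟨T, h1, h2⟩ := ((hM.tendsto_atTop.eventually_ge_atTop 2).and (eventually_ge_atTop (0:ℝ))).exists
  exact ⟨T, h2, h1⟩

lemma delta2_consts (hnd : ∀ t > (0:ℝ), 0 < M t) (hΔ : Delta2Zero M) :
    ∃ c > (0:ℝ), ∃ t₀ > (0:ℝ), ∀ t, 0 < t → t ≤ t₀ → M (2*t) ≤ M t / c := by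
  unfold Delta2Zero at hΔ
  rw [liminf_eq] at hΔ
  have hne : ({a | ∀ᶠ t in 𝓝[>] (0:ℝ), a ≤ M t / M (2*t)} : Set ℝ).Nonempty := by
    refine ⟨0, ?_⟩
    filter_upwards [self_mem_nhdsWithin] with t ht
    have ht' : (0:ℝ) < t := ht
    exact div_nonneg (hnd t ht').le (hnd _ (by linarith)).le
  obtain ⟨c, hcmem, hc⟩ := exists_lt_of_lt_csSup hne hΔ
  rw [Set.mem_setOf_eq, eventually_nhdsWithin_iff, Metric.eventually_nhds_iff] at hcmem
  obtain ⟨r, hr, hmem⟩ := hcmem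
  refine ⟨c, hc, r/2, by linarith, fun t ht hts => ?_⟩
  have hd : dist t 0 < r := by
    rw [Real.dist_eq, sub_zero, abs_of_pos ht]; linarith
  have h2 := hmem hd ht
  have h2t : 0 < M (2*t) := hnd _ (by linarith)
  rw [le_div_iff₀ h2t] at h2
  rw [le_div_iff₀ hc]
  linarith

lemma doubling {c t₀ : ℝ} (hM : IsOrliczFunction M) (hc : 0 < c) (ht₀ : 0 < t₀)
    (hH : ∀ t, 0 < t → t ≤ t₀ → M (2*t) ≤ M t / c) :
    ∀ k : ℕ, ∀ t : ℝ, 0 ≤ t → 2^k * t ≤ 2*t₀ → M (2^k * t) ≤ M t / c^k := by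
  intro k
  induction k with
  | zero => intro t ht _; simp
  | succ k ih =>
    intro t ht hbound
    rcases eq_or_lt_of_le ht with h0 | htpos
    · rw [← h0]
      simp [hM.map_zero, mul_zero]
    · have hk : (0:ℝ) < 2^k := by positivity
      have h2k : 2^k * t ≤ t₀ := by
        have h : (2:ℝ)^(k+1) = 2 * 2^k := by ring
        rw [h] at hbound; nlinarith
      have h1 : M (2^(k+1) * t) ≤ M (2^k * t) / c := by
        have h : (2:ℝ)^(k+1) * t = 2 * (2^k * t) := by ring
        rw [h]
        exact hH _ (by positivity) h2k
      have h2 : M (2^k * t) ≤ M t / c^k := ih t ht (by nlinarith)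
      calc M (2^(k+1) * t) ≤ M (2^k * t) / c := h1
        _ ≤ (M t / c^k) / c := by gcongr
        _ = M t / c^(k+1) := by rw [div_div, ← pow_succ]

end Helpers

section Helpers2
variable {M : ℝ → ℝ}

lemma abs_div_pos {y ρ : ℝ} (hρ : 0 < ρ) : |y / ρ| = |y| / ρ := by
  rw [abs_div, abs_of_pos hρ]

set_option maxHeartbeats 1000000 in
lemma sigma_fin (hM : IsOrliczFunction M) (hnd : ∀ t > (0:ℝ), 0 < M t)
    {c t₀ : ℝ} (hc : 0 < c) (ht₀ : 0 < t₀)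
    (hH : ∀ t, 0 < t → t ≤ t₀ → M (2*t) ≤ M t / c) {y : ℕ → ℝ} (hy : MemLM M y) :
    sigmaM M y ≠ ⊤ := by
  obtain ⟨⟨A, hA⟩, ρ, hρ, hfin⟩ := hy
  obtain ⟨k, hk⟩ := pow_unbounded_of_one_lt (R := ℝ) ρ one_lt_two
  set s : ℝ := 2*t₀/2^k with hs
  have h2k : (0:ℝ) < 2^k := by positivity
  have hspos : 0 < s := by positivity
  have hMs : 0 < M s := hnd s hspos
  simp only [sigmaM] at hfin ⊢
  set f : ℕ → ENNReal := fun n => ENNReal.ofReal (M |y n / ρ|) with hf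
  have htail := ENNReal.tendsto_sum_nat_add f hfin
  obtain ⟨N, hN⟩ := (htail.eventually_lt_const (ENNReal.ofReal_pos.2 hMs)).exists
  -- every tail coordinate is small
  have hsmall : ∀ i : ℕ, |y (i + N)| / ρ ≤ s := by
    intro i
    have h1 : f (i + N) ≤ ∑' (j : ℕ), f (j + N) := ENNReal.le_tsum i
    have h2 : f (i + N) < ENNReal.ofReal (M s) := lt_of_le_of_lt h1 hN
    simp only [hf] at h2
    rw [ENNReal.ofReal_lt_ofReal_iff_of_nonneg (M_nonneg hM (abs_nonneg _))] at h2
    have := M_lt_imp hM (abs_nonneg _) hspos.le h2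
    rwa [abs_div_pos hρ] at this
  -- pointwise estimate on the tail
  have hpt : ∀ i : ℕ, ENNReal.ofReal (M |y (i + N)|) ≤
      ENNReal.ofReal (M |y (i + N) / ρ|) * ENNReal.ofReal ((c^k)⁻¹) := by
    intro i
    have ht0 : 0 ≤ |y (i + N)| / ρ := div_nonneg (abs_nonneg _) hρ.le
    have hd := doubling hM hc ht₀ hH k (|y (i + N)| / ρ) ht0
      (by
        have := hsmall i
        calc 2^k * (|y (i+N)|/ρ) ≤ 2^k * s := by nlinarith
          _ = 2*t₀ := by rw [hs]; field_simp)
    have hle : |y (i + N)| ≤ 2^k * (|y (i + N)| / ρ) := by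
      rw [mul_div_assoc']
      rw [le_div_iff₀ hρ]
      nlinarith [abs_nonneg (y (i + N))]
    have h3 : M |y (i + N)| ≤ M (|y (i+N)|/ρ) / c^k :=
      le_trans (M_mono hM (abs_nonneg _) hle) hd
    calc ENNReal.ofReal (M |y (i + N)|) ≤ ENNReal.ofReal (M (|y (i+N)|/ρ) / c^k) :=
          ENNReal.ofReal_le_ofReal h3
      _ = ENNReal.ofReal (M (|y (i+N)|/ρ) * (c^k)⁻¹) := by rw [div_eq_mul_inv]
      _ = ENNReal.ofReal (M (|y (i+N)|/ρ)) * ENNReal.ofReal ((c^k)⁻¹) :=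
          ENNReal.ofReal_mul (M_nonneg hM (div_nonneg (abs_nonneg _) hρ.le))
      _ = ENNReal.ofReal (M |y (i+N) / ρ|) * ENNReal.ofReal ((c^k)⁻¹) := by
          rw [abs_div_pos hρ]
  -- split the sum
  have hsplit := Summable.sum_add_tsum_nat_add' (f := fun n => ENNReal.ofReal (M |y n|)) (k := N) ENNReal.summable
  rw [← hsplit]
  have h1 : (∑ i ∈ Finset.range N, ENNReal.ofReal (M |y i|)) ≠ ⊤ := by
    refine (ENNReal.sum_lt_top.2 fun i _ => ENNReal.ofReal_lt_top).ne
  have h2 : (∑' (i : ℕ), ENNReal.ofReal (M |y (i + N)|)) ≠ ⊤ := by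
    have hle : (∑' (i : ℕ), ENNReal.ofReal (M |y (i + N)|)) ≤
        (∑' (i : ℕ), f (i + N)) * ENNReal.ofReal ((c^k)⁻¹) := by
      rw [← ENNReal.tsum_mul_right]
      exact ENNReal.tsum_le_tsum hpt
    have htailfin : (∑' (i : ℕ), f (i + N)) ≠ ⊤ := (lt_of_lt_of_le hN le_top).ne
    exact (lt_of_le_of_lt hle (ENNReal.mul_lt_top htailfin.lt_top ENNReal.ofReal_lt_top)).ne
  exact ENNReal.add_ne_top.2 ⟨h1, h2⟩

lemma summable_M (hM : IsOrliczFunction M) {y : ℕ → ℝ} (h : sigmaM M y ≠ ⊤) :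
    Summable (fun n => M |y n|) := by
  have := ENNReal.summable_toReal h
  simpa [ENNReal.toReal_ofReal (M_nonneg hM (abs_nonneg _))] using this

end Helpers2

section Helpers3
variable {M : ℝ → ℝ}

lemma lux_set_nonempty (hM : IsOrliczFunction M) {y : ℕ → ℝ} (hy : MemLM M y) :
    ∃ ρ > (0:ℝ), sigmaM M (fun n => y n / ρ) ≤ 1 := by
  obtain ⟨⟨A, hA⟩, ρ₀, hρ₀, hfin⟩ := hy
  have hA0 : 0 ≤ A := le_trans (abs_nonneg _) (hA 0)
  simp only [sigmaM] at hfin ⊢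
  set f : ℕ → ENNReal := fun n => ENNReal.ofReal (M |y n / ρ₀|) with hf
  have htail := ENNReal.tendsto_sum_nat_add f hfin
  obtain ⟨N, hN⟩ := (htail.eventually_lt_const
    (show (0:ENNReal) < ENNReal.ofReal (1/2) by norm_num)).exists
  obtain ⟨s, hs, hMs⟩ := M_small hM (show (0:ℝ) < 1/(2*(N+1)) by positivity)
  set ρ : ℝ := max ρ₀ ((A+1)/s) with hρdef
  have hρ : 0 < ρ := lt_of_lt_of_le hρ₀ (le_max_left _ _)
  refine ⟨ρ, hρ, ?_⟩
  have key : ∀ n, ENNReal.ofReal (M |y n / ρ|) ≤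
      (if n < N then ENNReal.ofReal (1/(2*(N+1))) else f n) := by
    intro n
    by_cases hn : n < N
    · simp only [hn, if_true]
      apply ENNReal.ofReal_le_ofReal
      have h1 : |y n / ρ| ≤ s := by
        rw [abs_div_pos hρ]
        rw [div_le_iff₀ hρ]
        have h2 : (A+1)/s ≤ ρ := le_max_right _ _
        have h3 : A + 1 ≤ ρ * s := by
          rw [div_le_iff₀ hs] at h2; linarith
        calc |y n| ≤ A := hA n
          _ ≤ ρ * s - 1 := by linarith
          _ ≤ s * ρ := by linarith [mul_comm ρ s]
      exact le_trans (M_mono hM (abs_nonneg _) h1) hMs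
    · simp only [hn, if_false, hf]
      apply ENNReal.ofReal_le_ofReal
      apply M_mono hM (abs_nonneg _)
      rw [abs_div_pos hρ, abs_div_pos hρ₀]
      exact div_le_div_of_nonneg_left (abs_nonneg _) hρ₀ (le_max_left _ _)
  calc (∑' n, ENNReal.ofReal (M |y n / ρ|))
      ≤ ∑' n, (if n < N then ENNReal.ofReal (1/(2*(N+1):ℝ)) else f n) :=
        ENNReal.tsum_le_tsum key
    _ = (∑ n ∈ Finset.range N, (if n < N then ENNReal.ofReal (1/(2*(N+1):ℝ)) else f n))
        + ∑' i, (if i + N < N then ENNReal.ofReal (1/(2*(N+1):ℝ)) else f (i + N)) :=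
        (Summable.sum_add_tsum_nat_add' (k := N) ENNReal.summable).symm
    _ = (∑ n ∈ Finset.range N, ENNReal.ofReal (1/(2*(N+1):ℝ))) + ∑' i, f (i + N) := by
        congr 1
        · exact Finset.sum_congr rfl fun n hn => by
            simp [Finset.mem_range.1 hn]
        · exact tsum_congr fun i => by simp
    _ ≤ ENNReal.ofReal (1/2) + ENNReal.ofReal (1/2) := by
        refine add_le_add ?_ hN.le
        rw [Finset.sum_const, Finset.card_range, nsmul_eq_mul,
          ← ENNReal.ofReal_natCast, ← ENNReal.ofReal_mul (Nat.cast_nonneg N)]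
        apply ENNReal.ofReal_le_ofReal
        rw [mul_one_div, div_le_div_iff₀ (by positivity) (by norm_num)]
        push_cast
        nlinarith [Nat.cast_nonneg (α := ℝ) N]
    _ ≤ 1 := by
        rw [← ENNReal.ofReal_add (by norm_num) (by norm_num)]
        norm_num

end Helpers3

section Helpers4
variable {M : ℝ → ℝ}

lemma coord_bound (hM : IsOrliczFunction M) {y : ℕ → ℝ} {K T₁ : ℝ} (hy : MemLM M y)
    (hK : luxNorm M y ≤ K) (hT₁ : 0 ≤ T₁) (hMT₁ : 2 ≤ M T₁) :
    ∀ n, |y n| ≤ (max K 0 + 1) * T₁ := by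
  obtain ⟨ρ₁, hρ₁, hσ₁⟩ := lux_set_nonempty hM hy
  have hne : ({ρ : ℝ | 0 < ρ ∧ sigmaM M (fun n => y n / ρ) ≤ 1}).Nonempty := ⟨ρ₁, hρ₁, hσ₁⟩
  have hlt : luxNorm M y < max K 0 + 1 :=
    lt_of_le_of_lt hK (by nlinarith [le_max_left K (0:ℝ)])
  obtain ⟨ρ, ⟨hρpos, hσ⟩, hρlt⟩ := exists_lt_of_csInf_lt hne hlt
  intro n
  have h1 : ENNReal.ofReal (M |y n / ρ|) ≤ 1 := le_trans (ENNReal.le_tsum n) hσ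
  have h2 : M (|y n| / ρ) ≤ 1 := by
    rw [← ENNReal.ofReal_one, ENNReal.ofReal_le_ofReal_iff zero_le_one] at h1
    rwa [abs_div_pos hρpos] at h1
  have h3 : |y n| / ρ ≤ T₁ := by
    by_contra hcon
    push_neg at hcon
    have := M_mono hM hT₁ hcon.le
    linarith
  calc |y n| = ρ * (|y n| / ρ) := by field_simp
    _ ≤ (max K 0 + 1) * T₁ := by
        apply mul_le_mul hρlt.le h3 (div_nonneg (abs_nonneg _) hρpos.le)
        nlinarith [le_max_right K (0:ℝ)]

lemma sigma_scale (hM : IsOrliczFunction M) (hnd : ∀ t > (0:ℝ), 0 < M t)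
    {c t₀ : ℝ} (hc : 0 < c) (ht₀ : 0 < t₀)
    (hH : ∀ t, 0 < t → t ≤ t₀ → M (2*t) ≤ M t / c)
    {k : ℕ} {η ε : ℝ} (hε : 0 < ε) (hk : 1/ε ≤ 2^k)
    (hη0 : 0 < η) (hη1 : η ≤ c^k/2) (hη2 : η ≤ M (2*t₀/2^k) / 2)
    {z : ℕ → ℝ} (hz : sigmaM M z ≤ ENNReal.ofReal η) :
    sigmaM M (fun n => z n / ε) ≤ ENNReal.ofReal (1/2) := by
  have h2k : (0:ℝ) < 2^k := by positivity
  set s : ℝ := 2*t₀/2^k with hs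
  have hspos : 0 < s := by positivity
  have hMs : 0 < M s := hnd s hspos
  simp only [sigmaM] at hz ⊢
  -- each coordinate is small
  have hcoord : ∀ n, |z n| ≤ s := by
    intro n
    have h1 : ENNReal.ofReal (M |z n|) ≤ ENNReal.ofReal η := le_trans (ENNReal.le_tsum n) hz
    rw [ENNReal.ofReal_le_ofReal_iff hη0.le] at h1
    by_contra hcon
    push_neg at hcon
    have := M_mono hM hspos.le hcon.le
    linarith
  have hpt : ∀ n, ENNReal.ofReal (M |z n / ε|) ≤
      ENNReal.ofReal (M |z n|) * ENNReal.ofReal ((c^k)⁻¹) := by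
    intro n
    have h0 : (0:ℝ) ≤ |z n| := abs_nonneg _
    have hd := doubling hM hc ht₀ hH k |z n| h0
      (by
        have := hcoord n
        calc 2^k * |z n| ≤ 2^k * s := by nlinarith
          _ = 2*t₀ := by rw [hs]; field_simp)
    have hle : |z n / ε| ≤ 2^k * |z n| := by
      rw [abs_div_pos hε]
      rw [div_le_iff₀ hε]
      have h1 : (1:ℝ) ≤ 2^k * ε := by
        rw [div_le_iff₀ hε] at hk; linarith
      nlinarith
    have h3 : M |z n / ε| ≤ M |z n| / c^k :=
      le_trans (M_mono hM (abs_nonneg _) hle) hd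
    calc ENNReal.ofReal (M |z n / ε|) ≤ ENNReal.ofReal (M |z n| / c^k) :=
          ENNReal.ofReal_le_ofReal h3
      _ = ENNReal.ofReal (M |z n| * (c^k)⁻¹) := by rw [div_eq_mul_inv]
      _ = ENNReal.ofReal (M |z n|) * ENNReal.ofReal ((c^k)⁻¹) :=
          ENNReal.ofReal_mul (M_nonneg hM (abs_nonneg _))
  calc (∑' n, ENNReal.ofReal (M |z n / ε|))
      ≤ ∑' n, ENNReal.ofReal (M |z n|) * ENNReal.ofReal ((c^k)⁻¹) :=
        ENNReal.tsum_le_tsum hpt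
    _ = (∑' n, ENNReal.ofReal (M |z n|)) * ENNReal.ofReal ((c^k)⁻¹) :=
        ENNReal.tsum_mul_right
    _ ≤ ENNReal.ofReal η * ENNReal.ofReal ((c^k)⁻¹) := by gcongr
    _ = ENNReal.ofReal (η * (c^k)⁻¹) := (ENNReal.ofReal_mul hη0.le).symm
    _ ≤ ENNReal.ofReal (1/2) := by
        apply ENNReal.ofReal_le_ofReal
        have hck : (0:ℝ) < c^k := by positivity
        rw [← div_eq_mul_inv, div_le_div_iff₀ hck (by norm_num)]
        linarith

end Helpers4


set_option maxHeartbeats 4000000 in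
/-- Let `M` be a non-degenerate Orlicz function with `Δ₂` at zero, `S ⊆ ℓ_M` nonempty and
bounded. For every `ε > 0` there is `δ > 0` such that for every `x ∈ S` there is a bounded
sequence `a` with `0 ≤ a_n ≤ ε`, `g_a(x) ≤ inf_S g_a + δ` and
`α({y ∈ S : g_a(y) ≤ inf_S g_a + 3δ}) ≤ ε`. -/
theorem stmt11 (M : ℝ → ℝ) (hM : IsOrliczFunction M) (hnd : ∀ t > (0 : ℝ), 0 < M t)
    (hΔ : Delta2Zero M)
    (S : Set (ℕ → ℝ)) (hS : S.Nonempty) (hSsub : ∀ x ∈ S, MemLM M x)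
    (hSbdd : ∃ K : ℝ, ∀ x ∈ S, luxNorm M x ≤ K) :
    ∀ ε > (0 : ℝ), ∃ δ > (0 : ℝ), ∀ x ∈ S, ∃ a : ℕ → ℝ,
      (∀ n, 0 ≤ a n ∧ a n ≤ ε) ∧
      gA M a x ≤ sInf (gA M a '' S) + δ ∧
      kurLM M {y ∈ S | gA M a y ≤ sInf (gA M a '' S) + 3 * δ} ≤ ENNReal.ofReal ε := by
  intro ε hε
  obtain ⟨c, hc, t₀, ht₀, hH⟩ := delta2_consts hnd hΔ
  obtain ⟨k, hk⟩ := pow_unbounded_of_one_lt (R := ℝ) (1/ε) one_lt_two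
  have h2k : (0:ℝ) < 2^k := by positivity
  have hck : (0:ℝ) < c^k := by positivity
  set s₁ : ℝ := 2*t₀/2^k with hs₁
  have hs₁pos : 0 < s₁ := by positivity
  have hMs₁ : 0 < M s₁ := hnd _ hs₁pos
  set η : ℝ := min (c^k/2) (M s₁/2) with hηdef
  have hη0 : 0 < η := lt_min (by positivity) (by positivity)
  refine ⟨ε * η / 4, by positivity, ?_⟩
  -- uniform data
  obtain ⟨K, hK⟩ := hSbdd
  obtain ⟨T₁, hT₁, hMT₁⟩ := M_big hM
  set T : ℝ := (max K 0 + 1) * T₁ with hTdef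
  have hTnn : 0 ≤ T := by
    have : (0:ℝ) ≤ max K 0 + 1 := by positivity
    exact mul_nonneg this hT₁
  have hcoordS : ∀ y ∈ S, ∀ n, |y n| ≤ T := fun y hy =>
    coord_bound hM (hSsub y hy) (hK y hy) hT₁ hMT₁
  have hfinS : ∀ y ∈ S, sigmaM M y ≠ ⊤ := fun y hy =>
    sigma_fin hM hnd hc ht₀ hH (hSsub y hy)
  have hsumS : ∀ y ∈ S, Summable (fun n => M |y n|) := fun y hy =>
    summable_M hM (hfinS y hy)
  intro x hx
  -- tail cut N
  have htendx := ENNReal.tendsto_sum_nat_add (fun n => ENNReal.ofReal (M |x n|))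
    (by simpa [sigmaM] using hfinS x hx)
  obtain ⟨N, hN⟩ := (htendx.eventually_lt_const
    (show (0:ENNReal) < ENNReal.ofReal (η/4) by exact ENNReal.ofReal_pos.2 (by positivity))).exists
  have htailx : (∑' i, M |x (i + N)|) < η/4 := by
    have hsum : Summable (fun i => M |x (i + N)|) :=
      (summable_nat_add_iff N).2 (hsumS x hx)
    have heq : ENNReal.ofReal (∑' i, M |x (i + N)|) = ∑' i, ENNReal.ofReal (M |x (i + N)|) :=
      ENNReal.ofReal_tsum_of_nonneg (fun i => M_nonneg hM (abs_nonneg _)) hsum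
    have := lt_of_le_of_lt heq.le hN
    rwa [ENNReal.ofReal_lt_ofReal_iff_of_nonneg
      (tsum_nonneg fun i => M_nonneg hM (abs_nonneg _))] at this
  set a : ℕ → ℝ := fun n => if n < N then 0 else ε with ha
  have habd : ∀ n, 0 ≤ a n ∧ a n ≤ ε := by
    intro n; by_cases hn : n < N <;> simp [ha, hn, hε.le]
  -- value of gA
  have hgA : ∀ y : ℕ → ℝ, Summable (fun n => M |y n|) →
      gA M a y = ε * ∑' i, M |y (i + N)| := by
    intro y hsy
    have h1 : gA M a y = ∑' n, (if n < N then 0 else ε * M |y n|) := by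
      refine tsum_congr fun n => ?_
      by_cases hn : n < N <;> simp [ha, hn]
    have hg : Summable (fun n => if n < N then 0 else ε * M |y n|) := by
      apply Summable.of_nonneg_of_le _ _ (hsy.mul_left ε)
      · intro n; by_cases hn : n < N <;>
          simp [hn, mul_nonneg hε.le (M_nonneg hM (abs_nonneg _))]
      · intro n; by_cases hn : n < N <;>
          simp [hn, mul_nonneg hε.le (M_nonneg hM (abs_nonneg _))]
    rw [h1, ← Summable.sum_add_tsum_nat_add N hg]
    have h2 : (∑ n ∈ Finset.range N, (if n < N then 0 else ε * M |y n|)) = 0 :=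
      Finset.sum_eq_zero fun n hn => by simp [Finset.mem_range.1 hn]
    have h3 : (∑' i, (if i + N < N then 0 else ε * M |y (i + N)|)) = ε * ∑' i, M |y (i + N)| := by
      rw [← tsum_mul_left]
      exact tsum_congr fun i => by simp
    rw [h2, h3, zero_add]
  have hgnn : ∀ y : ℕ → ℝ, 0 ≤ gA M a y := fun y =>
    tsum_nonneg fun n => mul_nonneg (habd n).1 (M_nonneg hM (abs_nonneg _))
  have hbdd : BddBelow (gA M a '' S) := ⟨0, fun v ⟨y, _, e⟩ => e ▸ hgnn y⟩
  have hInf0 : 0 ≤ sInf (gA M a '' S) := le_csInf (hS.image _) (fun v ⟨y, _, e⟩ => e ▸ hgnn y)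
  have hInfle : sInf (gA M a '' S) ≤ gA M a x := csInf_le hbdd ⟨x, hx, rfl⟩
  have hgax : gA M a x ≤ ε * η / 4 := by
    rw [hgA x (hsumS x hx)]
    calc ε * ∑' i, M |x (i + N)| ≤ ε * (η/4) := by nlinarith
      _ = ε * η / 4 := by ring
  refine ⟨a, habd, by linarith, ?_⟩
  -- now the Kuratowski bound
  apply sInf_le
  refine ⟨ENNReal.ofReal_pos.2 hε, ?_⟩
  obtain ⟨s₂, hs₂, hMs₂⟩ := M_small hM (show (0:ℝ) < 1/(2*(N+1):ℝ) by positivity)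
  set β : ℝ := ε * s₂ with hβdef
  have hβ : 0 < β := mul_pos hε hs₂
  set m : ℤ := ⌈T/β⌉ + 1 with hmdef
  have hm1 : (1:ℤ) ≤ m := by
    have h0 : (0:ℝ) ≤ T/β := div_nonneg hTnn hβ.le
    have := Int.le_ceil (T/β)
    have h1 : (0:ℤ) ≤ ⌈T/β⌉ := by exact_mod_cast Int.ceil_nonneg h0
    omega
  set F : Set (ℕ → ℝ) :=
    (fun (v : Fin N → ℤ) => (fun n => if h : n < N then β * ((v ⟨n, h⟩ : ℤ) : ℝ) else 0)) ''
      (Set.univ.pi fun _ : Fin N => Set.Icc (-m) m) with hFdef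
  refine ⟨F, ?_, ?_, ?_⟩
  · exact Set.Finite.image _ (Set.Finite.pi fun i => Set.finite_Icc _ _)
  · rintro g ⟨v, hv, rfl⟩
    constructor
    · refine ⟨β * m, fun n => ?_⟩
      by_cases hn : n < N
      · simp only [hn, dif_pos]
        rw [abs_mul, abs_of_pos hβ]
        have hvi := (Set.mem_univ_pi.1 hv) ⟨n, hn⟩
        have h1 : |(v ⟨n, hn⟩ : ℝ)| ≤ (m:ℝ) := by
          rw [← Int.cast_abs]
          exact_mod_cast abs_le.2 ⟨hvi.1, hvi.2⟩
        nlinarith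
      · simp only [hn, dif_neg, not_false_iff, abs_zero]
        positivity
    · refine ⟨1, one_pos, ?_⟩
      have heq : sigmaM M (fun n => (if h : n < N then β * ((v ⟨n, h⟩ : ℤ) : ℝ) else 0) / 1) =
          ∑ n ∈ Finset.range N, ENNReal.ofReal
            (M |(if h : n < N then β * ((v ⟨n, h⟩ : ℤ) : ℝ) else 0) / 1|) := by
        simp only [sigmaM]
        refine tsum_eq_sum fun n hn => ?_
        have hn' : ¬ n < N := fun h => hn (Finset.mem_range.2 h)
        simp [hn', hM.map_zero]
      rw [heq]
      exact (ENNReal.sum_lt_top.2 fun i _ => ENNReal.ofReal_lt_top).ne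
  · rintro y ⟨hyS, hyb⟩
    -- tail modular bound for y
    have htaily : (∑' i, M |y (i + N)|) ≤ η := by
      have h1 : gA M a y ≤ ε * η := by
        have := hInfle
        calc gA M a y ≤ sInf (gA M a '' S) + 3 * (ε * η / 4) := hyb
          _ ≤ (ε * η / 4) + 3 * (ε * η / 4) := by linarith
          _ = ε * η := by ring
      rw [hgA y (hsumS y hyS)] at h1
      exact (mul_le_mul_iff_right₀ hε).1 h1
    -- the tail part
    set z : ℕ → ℝ := fun n => if n < N then 0 else y n with hzdef
    have hz : sigmaM M z ≤ ENNReal.ofReal η := by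
      have hzcalc : sigmaM M z = ∑' i, ENNReal.ofReal (M |y (i + N)|) := by
        simp only [sigmaM]
        rw [← Summable.sum_add_tsum_nat_add' (k := N) ENNReal.summable]
        have h1 : (∑ n ∈ Finset.range N, ENNReal.ofReal (M |z n|)) = 0 :=
          Finset.sum_eq_zero fun n hn => by
            simp [hzdef, Finset.mem_range.1 hn, hM.map_zero]
        have h2 : (∑' i, ENNReal.ofReal (M |z (i + N)|)) = ∑' i, ENNReal.ofReal (M |y (i + N)|) :=
          tsum_congr fun i => by simp [hzdef]
        rw [h1, h2, zero_add]
      have hsumtail : Summable (fun i => M |y (i + N)|) :=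
        (summable_nat_add_iff (f := fun n => M |y n|) N).2 (hsumS y hyS)
      have heq : ENNReal.ofReal (∑' i, M |y (i + N)|) = ∑' i, ENNReal.ofReal (M |y (i + N)|) :=
        ENNReal.ofReal_tsum_of_nonneg (fun i => M_nonneg hM (abs_nonneg _)) hsumtail
      rw [hzcalc, ← heq]
      exact ENNReal.ofReal_le_ofReal htaily
    have hη1 : η ≤ c^k/2 := min_le_left _ _
    have hη2 : η ≤ M (2*t₀/2^k)/2 := by rw [← hs₁]; exact min_le_right _ _
    have hzε : sigmaM M (fun n => z n / ε) ≤ ENNReal.ofReal (1/2) :=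
      sigma_scale (k := k) (η := η) (ε := ε) hM hnd hc ht₀ hH hε hk.le hη0 hη1 hη2 hz
    -- the grid point
    set v : Fin N → ℤ := fun i => ⌊y i.val / β⌋ with hvdef
    have hvmem : v ∈ Set.univ.pi fun _ : Fin N => Set.Icc (-m) m := by
      rw [Set.mem_univ_pi]
      intro i
      have hyi : |y i.val| ≤ T := hcoordS y hyS i.val
      have hub : y i.val / β ≤ T / β := by
        gcongr
        exact le_trans (le_abs_self _) hyi
      have hlb : -(T / β) ≤ y i.val / β := by
        rw [← neg_div]
        gcongr
        linarith [neg_abs_le (y i.val)]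
      have hce := Int.le_ceil (T/β)
      constructor
      · rw [Int.le_floor, hmdef]
        push_cast
        linarith
      · have h1 : ((⌊y i.val/β⌋ : ℤ) : ℝ) ≤ (m:ℝ) := by
          have hfl := Int.floor_le (y i.val/β)
          rw [hmdef]
          push_cast
          linarith
        exact_mod_cast h1
    refine ⟨(fun n => if h : n < N then β * ((v ⟨n, h⟩ : ℤ) : ℝ) else 0), ⟨v, hvmem, rfl⟩, ?_⟩
    -- head part
    set hd : ℕ → ℝ := fun n => if n < N then y n - β * ((⌊y n / β⌋ : ℤ) : ℝ) else 0 with hhddef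
    have hdsmall : ∀ n, n < N → 0 ≤ hd n ∧ hd n ≤ β := by
      intro n hn
      have hfr : y n - β * ((⌊y n / β⌋ : ℤ) : ℝ) = β * Int.fract (y n / β) := by
        rw [Int.fract]
        field_simp
      have h0 := Int.fract_nonneg (y n / β)
      have h1 := (Int.fract_lt_one (y n / β)).le
      constructor
      · simp only [hhddef, hn, if_pos, hfr]
        positivity
      · simp only [hhddef, hn, if_pos, hfr]
        nlinarith
    have hhd : sigmaM M (fun n => hd n / ε) ≤ ENNReal.ofReal (1/2) := by
      simp only [sigmaM]
      rw [tsum_eq_sum (s := Finset.range N)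
        (fun n hn => by
          have hn' : ¬ n < N := fun h => hn (Finset.mem_range.2 h)
          simp [hhddef, hn', hM.map_zero])]
      have hterm : ∀ n ∈ Finset.range N,
          ENNReal.ofReal (M |hd n / ε|) ≤ ENNReal.ofReal (1/(2*(N+1):ℝ)) := by
        intro n hn
        have hn' : n < N := Finset.mem_range.1 hn
        obtain ⟨hd0, hdβ⟩ := hdsmall n hn'
        apply ENNReal.ofReal_le_ofReal
        have habs : |hd n / ε| ≤ s₂ := by
          rw [abs_div_pos hε, abs_of_nonneg hd0, div_le_iff₀ hε]
          calc hd n ≤ β := hdβ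
            _ = s₂ * ε := by rw [hβdef]; ring
        exact le_trans (M_mono hM (abs_nonneg _) habs) hMs₂
      calc (∑ n ∈ Finset.range N, ENNReal.ofReal (M |hd n / ε|))
          ≤ ∑ n ∈ Finset.range N, ENNReal.ofReal (1/(2*(N+1):ℝ)) := Finset.sum_le_sum hterm
        _ ≤ ENNReal.ofReal (1/2) := by
            rw [Finset.sum_const, Finset.card_range, nsmul_eq_mul,
              ← ENNReal.ofReal_natCast, ← ENNReal.ofReal_mul (Nat.cast_nonneg N)]
            apply ENNReal.ofReal_le_ofReal
            rw [mul_one_div, div_le_div_iff₀ (by positivity) (by norm_num)]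
            nlinarith [Nat.cast_nonneg (α := ℝ) N]
    -- combine
    have hcomb : sigmaM M (fun n =>
        (y n - (if h : n < N then β * ((v ⟨n, h⟩ : ℤ) : ℝ) else 0)) / ε) ≤ 1 := by
      have hpt : ∀ n, ENNReal.ofReal
            (M |(y n - (if h : n < N then β * ((v ⟨n, h⟩ : ℤ) : ℝ) else 0)) / ε|)
          ≤ ENNReal.ofReal (M |hd n / ε|) + ENNReal.ofReal (M |z n / ε|) := by
        intro n
        by_cases hn : n < N
        · have he : y n - (if h : n < N then β * ((v ⟨n, h⟩ : ℤ) : ℝ) else 0) = hd n := by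
            simp [hhddef, hn, hvdef]
          rw [he]
          exact le_self_add
        · have he : y n - (if h : n < N then β * ((v ⟨n, h⟩ : ℤ) : ℝ) else 0) = z n := by
            simp [hzdef, hn]
          have h2 : hd n = 0 := by simp [hhddef, hn]
          rw [he, h2]
          exact le_add_self
      calc sigmaM M (fun n =>
            (y n - (if h : n < N then β * ((v ⟨n, h⟩ : ℤ) : ℝ) else 0)) / ε)
          ≤ ∑' n, (ENNReal.ofReal (M |hd n / ε|) + ENNReal.ofReal (M |z n / ε|)) :=
            ENNReal.tsum_le_tsum hpt
        _ = (∑' n, ENNReal.ofReal (M |hd n / ε|)) + ∑' n, ENNReal.ofReal (M |z n / ε|) :=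
            ENNReal.tsum_add
        _ ≤ ENNReal.ofReal (1/2) + ENNReal.ofReal (1/2) := add_le_add hhd hzε
        _ ≤ 1 := by
            rw [← ENNReal.ofReal_add (by norm_num) (by norm_num)]
            norm_num
    have hlux : luxNorm M
        (fun n => y n - (if h : n < N then β * ((v ⟨n, h⟩ : ℤ) : ℝ) else 0)) ≤ ε := by
      apply csInf_le ⟨0, fun ρ hρ => hρ.1.le⟩
      exact ⟨hε, hcomb⟩
    exact ENNReal.ofReal_le_ofReal hlux
end
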